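/- Let ν > 0, s > 0, let φ̂ ∈ ℝ be such that sin(φ̂) ≠ 0 (so cot(φ̂) is defined), let c ≠ 0, and let F : (0,∞) → ℝ be the UTD transition function F(x) = 2√x · √( (√(2π)/4 − ∫₀^{√x} cos(y²) dy)² + (√(2π)/4 − ∫₀^{√x} sin(y²) dy)² ). Then the UTD diffraction term D(k) := −(ν/(2√(2πks))) · cot(φ̂) · F(2ks·c²) tends to 0 as k → ∞. -/

import Mathlib

open Real

/-- The Kouyoumjian–Pathak (UTD) transition function, expressed via Fresnel integrals:
`F(x) = 2√x · √( (√(2π)/4 − ∫₀^{√x} cos(y²) dy)² + (√(2π)/4 − ∫₀^{√x} sin(y²) dy)² )`. -/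
noncomputable def utdTransition (x : ℝ) : ℝ :=
  2 * Real.sqrt x *
    Real.sqrt ((Real.sqrt (2 * π) / 4 - ∫ y in (0 : ℝ)..Real.sqrt x, Real.cos (y ^ 2)) ^ 2 +
      (Real.sqrt (2 * π) / 4 - ∫ y in (0 : ℝ)..Real.sqrt x, Real.sin (y ^ 2)) ^ 2)

/-!
Write `∫₀^∞ exp (c y²) dy` (for `re c ≤ 0`, `c ≠ 0`) as `∫₀¹` plus one integration by parts on
`[1, ∞)`; the resulting expression is continuous in `c` on `{re c ≤ 0, ‖c‖ ≥ 1}` by dominated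
convergence, and for `re c < 0` it equals the Gaussian integral `√(π / -c) / 2`. Letting
`c = I - ε → I` gives the Fresnel limits `∫₀^T cos y², ∫₀^T sin y² → √(2π)/4`, so
`F(x) = 2√x · o(1)` and the prefactor `1/√k` wins.
-/

open Complex MeasureTheory Filter Set Topology

section GaussianImproper

variable {c : ℂ}

lemma norm_cexp_mul_sq_le_one (hc : c.re ≤ 0) (y : ℝ) : ‖cexp (c * y ^ 2)‖ ≤ 1 := by
  rw [norm_exp, Real.exp_le_one_iff, ← ofReal_pow, re_mul_ofReal]
  exact mul_nonpos_of_nonpos_of_nonneg hc (sq_nonneg y)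

lemma hasDerivAt_cexp_mul_sq_div (hc : c ≠ 0) {y : ℝ} (hy : y ≠ 0) :
    HasDerivAt (fun t : ℝ => cexp (c * t ^ 2) / (2 * c * t))
      (cexp (c * y ^ 2) - cexp (c * y ^ 2) / (2 * c * y ^ 2)) y := by
  have hy' : (y : ℂ) ≠ 0 := ofReal_ne_zero.mpr hy
  have hexp : HasDerivAt (fun z : ℂ => cexp (c * z ^ 2)) (cexp (c * y ^ 2) * (c * (2 * y))) y := by
    simpa using ((hasDerivAt_pow 2 (y : ℂ)).const_mul c).cexp
  have hlin : HasDerivAt (fun z : ℂ => 2 * c * z) (2 * c) y := by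
    simpa using (hasDerivAt_id (y : ℂ)).const_mul (2 * c)
  refine (hexp.div hlin (by simp [hc, hy'])).comp_ofReal.congr_deriv ?_
  field_simp

lemma continuousOn_cexp_mul_sq_div (hc : c ≠ 0) :
    ContinuousOn (fun y : ℝ => cexp (c * y ^ 2) / (2 * c * y ^ 2)) (Ioi 0) :=
  ContinuousOn.div (by fun_prop) (by fun_prop) fun y hy => by simp [hc, (mem_Ioi.mp hy).ne']

lemma norm_cexp_mul_sq_div_le (hc : c.re ≤ 0) {y : ℝ} (hy : 0 < y) :
    ‖cexp (c * y ^ 2) / (2 * c * y ^ 2)‖ ≤ (2 * ‖c‖)⁻¹ * y ^ (-2 : ℝ) := by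
  have hden : ‖2 * c * (y : ℂ) ^ 2‖ = 2 * ‖c‖ * y ^ 2 := by
    simp [← ofReal_pow, abs_of_pos hy]
  rw [norm_div, hden, Real.rpow_neg hy.le, Real.rpow_two, ← mul_inv, div_eq_mul_inv]
  exact mul_le_of_le_one_left (by positivity) (norm_cexp_mul_sq_le_one hc y)

lemma integrableOn_Ioi_cexp_mul_sq_div (hc : c.re ≤ 0) (hc0 : c ≠ 0) :
    IntegrableOn (fun y : ℝ => cexp (c * y ^ 2) / (2 * c * y ^ 2)) (Ioi 1) := by
  refine Integrable.mono'
    ((integrableOn_Ioi_rpow_of_lt (a := -2) (by norm_num) one_pos).const_mul (2 * ‖c‖)⁻¹)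
    (((continuousOn_cexp_mul_sq_div hc0).mono
      (Ioi_subset_Ioi zero_le_one)).aestronglyMeasurable measurableSet_Ioi) ?_
  filter_upwards [ae_restrict_mem measurableSet_Ioi] with y hy
  exact norm_cexp_mul_sq_div_le hc (zero_lt_one.trans hy)

lemma integral_cexp_mul_sq_eq_by_parts (hc : c ≠ 0) {T : ℝ} (hT : 1 ≤ T) :
    ∫ y in (1 : ℝ)..T, cexp (c * y ^ 2) = cexp (c * T ^ 2) / (2 * c * T) - cexp c / (2 * c)
      + ∫ y in (1 : ℝ)..T, cexp (c * y ^ 2) / (2 * c * y ^ 2) := by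
  have hpos : uIcc 1 T ⊆ Ioi (0 : ℝ) := fun y hy =>
    zero_lt_one.trans_le (uIcc_of_le hT ▸ hy).1
  have hint₁ : IntervalIntegrable (fun y : ℝ => cexp (c * y ^ 2)) volume 1 T :=
    (by fun_prop : Continuous fun y : ℝ => cexp (c * y ^ 2)).intervalIntegrable _ _
  have hint₂ : IntervalIntegrable (fun y : ℝ => cexp (c * y ^ 2) / (2 * c * y ^ 2)) volume 1 T :=
    ((continuousOn_cexp_mul_sq_div hc).mono hpos).intervalIntegrable
  have hFTC := intervalIntegral.integral_eq_sub_of_hasDerivAt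
    (fun y hy => hasDerivAt_cexp_mul_sq_div hc (hpos hy).ne') (hint₁.sub hint₂)
  rw [intervalIntegral.integral_sub hint₁ hint₂] at hFTC
  simp only [one_pow, mul_one, ofReal_one] at hFTC
  linear_combination hFTC

lemma tendsto_cexp_mul_sq_div_atTop (hc : c.re ≤ 0) (hc0 : c ≠ 0) :
    Tendsto (fun T : ℝ => cexp (c * T ^ 2) / (2 * c * T)) atTop (𝓝 0) := by
  have hc2 : 0 < ‖2 * c‖ := norm_pos_iff.mpr (mul_ne_zero two_ne_zero hc0)
  refine squeeze_zero_norm' ?_ (tendsto_inv_atTop_zero.comp (tendsto_id.const_mul_atTop hc2))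
  filter_upwards [eventually_gt_atTop 0] with T hT
  rw [norm_div, norm_mul, norm_real, Real.norm_of_nonneg hT.le, div_eq_mul_inv]
  exact mul_le_of_le_one_left (by positivity) (norm_cexp_mul_sq_le_one hc T)

/-- For `re c ≤ 0`, `c ≠ 0`, the improper integral `∫₀^∞ exp (c y²) dy` (only conditionally
convergent when `re c = 0`), after one integration by parts on `[1, ∞)`. -/
noncomputable def improperGaussianIntegral (c : ℂ) : ℂ :=
  (∫ y in (0 : ℝ)..1, cexp (c * y ^ 2)) - cexp c / (2 * c)
    + ∫ y in Ioi (1 : ℝ), cexp (c * y ^ 2) / (2 * c * y ^ 2)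

lemma tendsto_integral_cexp_mul_sq (hc : c.re ≤ 0) (hc0 : c ≠ 0) :
    Tendsto (fun T : ℝ => ∫ y in (0 : ℝ)..T, cexp (c * y ^ 2)) atTop
      (𝓝 (improperGaussianIntegral c)) := by
  have htail := intervalIntegral_tendsto_integral_Ioi 1
    (integrableOn_Ioi_cexp_mul_sq_div hc hc0) tendsto_id
  have hlim := (((tendsto_const_nhds (x := ∫ y in (0 : ℝ)..1, cexp (c * y ^ 2))).add
    (tendsto_cexp_mul_sq_div_atTop hc hc0)).sub (tendsto_const_nhds (x := cexp c / (2 * c)))).add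
    htail
  rw [add_zero] at hlim
  refine hlim.congr' ?_
  filter_upwards [eventually_ge_atTop 1] with T hT
  rw [← intervalIntegral.integral_add_adjacent_intervals (b := 1) (c := T)
    ((by fun_prop : Continuous fun y : ℝ => cexp (c * y ^ 2)).intervalIntegrable _ _)
    ((by fun_prop : Continuous fun y : ℝ => cexp (c * y ^ 2)).intervalIntegrable _ _),
    integral_cexp_mul_sq_eq_by_parts hc0 hT]
  simp only [id]
  ring

lemma improperGaussianIntegral_eq_cpow (hc : c.re < 0) :
    improperGaussianIntegral c = (π / -c) ^ (1 / 2 : ℂ) / 2 := by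
  have hb : 0 < (-c).re := by simpa using hc
  have hint : IntegrableOn (fun y : ℝ => cexp (c * y ^ 2)) (Ioi 0) := by
    simpa using (integrable_cexp_neg_mul_sq hb).integrableOn
  refine tendsto_nhds_unique
    (tendsto_integral_cexp_mul_sq hc.le (fun h => by simp [h] at hc)) ?_
  rw [← integral_gaussian_complex_Ioi hb]
  simpa using intervalIntegral_tendsto_integral_Ioi 0 hint tendsto_id

lemma continuousOn_improperGaussianIntegral :
    ContinuousOn improperGaussianIntegral {c | c.re ≤ 0 ∧ 1 ≤ ‖c‖} := by
  have hne : ∀ c ∈ {c : ℂ | c.re ≤ 0 ∧ 1 ≤ ‖c‖}, c ≠ 0 := fun c hc =>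
    norm_pos_iff.mp (one_pos.trans_le hc.2)
  refine (ContinuousOn.sub ?_ ?_).add ?_
  · exact (intervalIntegral.continuous_parametric_intervalIntegral_of_continuous'
      (by fun_prop) 0 1).continuousOn
  · exact ContinuousOn.div (by fun_prop) (by fun_prop) fun c hc =>
      mul_ne_zero two_ne_zero (hne c hc)
  · refine continuousOn_of_dominated (bound := fun y : ℝ => 1 / 2 * y ^ (-2 : ℝ))
      (fun c hc => (integrableOn_Ioi_cexp_mul_sq_div hc.1 (hne c hc)).aestronglyMeasurable)
      (fun c hc => ?_)
      ((integrableOn_Ioi_rpow_of_lt (a := -2) (by norm_num) one_pos).const_mul (1 / 2)) ?_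
    · filter_upwards [ae_restrict_mem measurableSet_Ioi] with y hy
      refine (norm_cexp_mul_sq_div_le hc.1 (zero_lt_one.trans hy)).trans ?_
      refine mul_le_mul_of_nonneg_right ?_ (Real.rpow_nonneg (zero_lt_one.trans hy).le _)
      rw [one_div]
      exact inv_anti₀ two_pos (by linarith [hc.2])
    · filter_upwards [ae_restrict_mem measurableSet_Ioi] with y hy
      have hy0 : (y : ℂ) ≠ 0 := ofReal_ne_zero.mpr (zero_lt_one.trans hy).ne'
      exact ContinuousOn.div (by fun_prop) (by fun_prop) fun c hc => by simp [hne c hc, hy0]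

lemma cpow_pi_mul_I_half : ((π : ℂ) * I) ^ (1 / 2 : ℂ) = (√(2 * π) / 2 : ℝ) * (1 + I) := by
  have hsq : (((√(2 * π) / 2 : ℝ) : ℂ) * (1 + I)) ^ 2 = π * I := by
    have h : ((√(2 * π) : ℝ) : ℂ) ^ 2 = 2 * π := by
      rw [← ofReal_pow, Real.sq_sqrt (by positivity)]
      push_cast
      ring
    push_cast
    linear_combination (I / 2) * h + ((√(2 * π) : ℝ) : ℂ) ^ 2 / 4 * I_sq
  rw [← hsq, one_div, sq_cpow_two_inv]
  simp [Real.pi_pos]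

lemma improperGaussianIntegral_I : improperGaussianIntegral I = (π * I) ^ (1 / 2 : ℂ) / 2 := by
  have hpath : Tendsto (fun ε : ℝ => I - ε) (𝓝[>] 0) (𝓝[{c | c.re ≤ 0 ∧ 1 ≤ ‖c‖}] I) := by
    refine tendsto_nhdsWithin_iff.mpr ⟨?_, ?_⟩
    · simpa using ((by fun_prop : Continuous fun ε : ℝ => I - ε).tendsto 0).mono_left
        nhdsWithin_le_nhds
    · filter_upwards [self_mem_nhdsWithin] with ε hε
      refine ⟨by simpa using (mem_Ioi.mp hε).le, ?_⟩
      simpa using abs_im_le_norm (I - ε)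
  have hπI : (π : ℂ) / -(I - (0 : ℝ)) = π * I := by
    rw [ofReal_zero, sub_zero, div_neg, div_I]
    ring
  have hcpow : ContinuousAt (fun ε : ℝ => ((π : ℂ) / -(I - ε)) ^ (1 / 2 : ℂ) / 2) 0 := by
    refine ((continuousAt_cpow_const ?_).comp ?_).div_const 2
    · rw [hπI, mem_slitPlane_iff]
      simp [Real.pi_ne_zero]
    · exact continuousAt_const.div (by fun_prop) (by simp)
  refine tendsto_nhds_unique
    (((continuousOn_improperGaussianIntegral I (by simp)).tendsto.comp hpath).congr' ?_)
    (hπI ▸ hcpow.tendsto.mono_left nhdsWithin_le_nhds)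
  filter_upwards [self_mem_nhdsWithin] with ε hε
  exact improperGaussianIntegral_eq_cpow (by simpa using hε)

lemma tendsto_integral_cexp_I_mul_sq :
    Tendsto (fun T : ℝ => ∫ y in (0 : ℝ)..T, cexp (I * y ^ 2)) atTop
      (𝓝 ((√(2 * π) / 4 : ℝ) * (1 + I))) := by
  convert tendsto_integral_cexp_mul_sq (c := I) (by simp) I_ne_zero using 2
  rw [improperGaussianIntegral_I, cpow_pi_mul_I_half]
  push_cast
  ring

lemma integral_cexp_I_mul_sq (T : ℝ) :
    ∫ y in (0 : ℝ)..T, cexp (I * y ^ 2)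
      = ((∫ y in (0 : ℝ)..T, Real.cos (y ^ 2) : ℝ) : ℂ)
        + ((∫ y in (0 : ℝ)..T, Real.sin (y ^ 2) : ℝ) : ℂ) * I := by
  rw [← intervalIntegral.integral_ofReal, ← intervalIntegral.integral_ofReal,
    ← intervalIntegral.integral_mul_const, ← intervalIntegral.integral_add
      ((by fun_prop : Continuous fun y : ℝ => ((Real.cos (y ^ 2) : ℝ) : ℂ)).intervalIntegrable _ _)
      ((by fun_prop : Continuous fun y : ℝ => ((Real.sin (y ^ 2) : ℝ) : ℂ) * I).intervalIntegrable _ _)]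
  refine intervalIntegral.integral_congr fun y _ => ?_
  rw [mul_comm, ← ofReal_pow, exp_mul_I, ofReal_cos, ofReal_sin]

end GaussianImproper

lemma utdTransition_eq_norm (x : ℝ) :
    utdTransition x = 2 * √x *
      ‖(√(2 * π) / 4 : ℝ) * (1 + I) - ∫ y in (0 : ℝ)..√x, cexp (I * y ^ 2)‖ := by
  rw [utdTransition, integral_cexp_I_mul_sq, norm_eq_sqrt_sq_add_sq]
  simp

lemma tendsto_utdTransition_div_sqrt :
    Tendsto (fun x => utdTransition x / √x) atTop (𝓝 0) := by
  have hR := ((tendsto_iff_norm_sub_tendsto_zero.mp tendsto_integral_cexp_I_mul_sq).comp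
    Real.tendsto_sqrt_atTop).const_mul 2
  rw [mul_zero] at hR
  refine hR.congr' ?_
  filter_upwards [eventually_gt_atTop 0] with x hx
  rw [utdTransition_eq_norm, Function.comp_apply, norm_sub_rev]
  field_simp [(Real.sqrt_pos.mpr hx).ne']

theorem utd_term_tendsto_zero_general (ν s φhat c : ℝ) (hs : 0 < s) (hc : c ≠ 0) :
    Filter.Tendsto
      (fun k : ℝ => -(ν / (2 * Real.sqrt (2 * π * k * s))) * Real.cot φhat *
        utdTransition (2 * k * s * c ^ 2))
      Filter.atTop (nhds 0) := by
  have hx : Filter.Tendsto (fun k : ℝ => 2 * k * s * c ^ 2) Filter.atTop Filter.atTop :=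
    ((Filter.tendsto_id.const_mul_atTop two_pos).atTop_mul_const hs).atTop_mul_const
      (by positivity)
  have hD := (tendsto_utdTransition_div_sqrt.comp hx).const_mul
    (-(ν * √(2 * s * c ^ 2) / (2 * √(2 * π * s))) * Real.cot φhat)
  rw [mul_zero] at hD
  refine hD.congr' ?_
  filter_upwards [Filter.eventually_gt_atTop 0] with k hk
  have hsplit₁ : √(2 * π * k * s) = √(2 * π * s) * √k := by
    rw [← Real.sqrt_mul (by positivity)]; ring_nf
  have hsplit₂ : √(2 * k * s * c ^ 2) = √(2 * s * c ^ 2) * √k := by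
    rw [← Real.sqrt_mul (by positivity)]; ring_nf
  have hpos₁ : 0 < √(2 * π * s) := Real.sqrt_pos.mpr (by positivity)
  have hpos₂ : 0 < √(2 * s * c ^ 2) := Real.sqrt_pos.mpr (by positivity)
  have hpos_k : 0 < √k := Real.sqrt_pos.mpr hk
  rw [Function.comp_apply, hsplit₁, hsplit₂]
  field_simp

/-- Geometrical-optics limit: away from the shadow boundaries (`sin φ̂ ≠ 0`, `c ≠ 0`),
each UTD diffraction term
`D(k) = −(ν/(2√(2πks))) · cot(φ̂) · F(2ks·c²)` tends to `0` as the wavenumber `k → ∞`. -/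
theorem utd_term_tendsto_zero (ν s φhat c : ℝ) (hν : 0 < ν) (hs : 0 < s)
    (hsin : Real.sin φhat ≠ 0) (hc : c ≠ 0) :
    Filter.Tendsto
      (fun k : ℝ => -(ν / (2 * Real.sqrt (2 * π * k * s))) * Real.cot φhat *
        utdTransition (2 * k * s * c ^ 2))
      Filter.atTop (nhds 0) :=
  utd_term_tendsto_zero_general ν s φhat c hs hc
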